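/- For all k ≥ 1, if g_k(x_1,...,x_k) = g_k(x'_1,...,x'_k) then x_1+...+x_k = x'_1+...+x'_k, where g_k(x_1,...,x_k) = Σ_{j=1}^{k} h(j, x_1+...+x_j) and h(p,s) = C(s+p-1, p). -/
import Mathlib


/-- h(p,s) = C(s+p-1, p); note h(p,0) = C(p-1,p) = 0 for p ≥ 1. -/
def h (p s : ℕ) : ℕ := Nat.choose (s + p - 1) p

/-- g_k(x_1,…,x_k) = Σ_{j=1}^k h(j, x_1+⋯+x_j), coordinates given by x 0, x 1, …. -/
def g (k : ℕ) (x : ℕ → ℕ) : ℕ :=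
  ∑ j ∈ Finset.range k, h (j + 1) (∑ i ∈ Finset.range (j + 1), x i)

lemma hockey (s : ℕ) : ∀ k, ∑ j ∈ Finset.range k, Nat.choose (s + j) (j + 1)
    = Nat.choose (s + k) k - 1
  | 0 => by simp
  | (k + 1) => by
    rw [Finset.sum_range_succ, hockey s k]
    have h1 : 1 ≤ Nat.choose (s + k) k := Nat.choose_pos (by omega)
    have h2 : Nat.choose (s + k + 1) (k + 1)
        = Nat.choose (s + k) k + Nat.choose (s + k) (k + 1) :=
      Nat.choose_succ_succ (s + k) k
    have : s + (k + 1) = s + k + 1 := by omega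
    rw [this, h2]
    omega

lemma g_lt (k : ℕ) (hk : 1 ≤ k) (x x' : ℕ → ℕ)
    (hlt : ∑ i ∈ Finset.range k, x i < ∑ i ∈ Finset.range k, x' i) :
    g k x < g k x' := by
  set s := ∑ i ∈ Finset.range k, x i with hs
  set s' := ∑ i ∈ Finset.range k, x' i with hs'
  have hub : g k x ≤ Nat.choose (s + k) k - 1 := by
    rw [← hockey s k]
    apply Finset.sum_le_sum
    intro j hj
    simp only [Finset.mem_range] at hj
    have hSj : (∑ i ∈ Finset.range (j + 1), x i) ≤ s := by
      apply Finset.sum_le_sum_of_subset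
      exact Finset.range_subset_range.2 (by omega)
    have : h (j + 1) (∑ i ∈ Finset.range (j + 1), x i)
        = Nat.choose ((∑ i ∈ Finset.range (j + 1), x i) + j) (j + 1) := by
      simp [h]
    rw [this]
    exact Nat.choose_le_choose (j + 1) (by omega)
  have hlb : Nat.choose (s' + k - 1) k ≤ g k x' := by
    obtain ⟨m, rfl⟩ : ∃ m, k = m + 1 := ⟨k - 1, by omega⟩
    have hmem : m ∈ Finset.range (m + 1) := Finset.self_mem_range_succ m
    have := Finset.single_le_sum
      (f := fun j => h (j + 1) (∑ i ∈ Finset.range (j + 1), x' i))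
      (fun i _ => Nat.zero_le _) hmem
    simpa [g, h, ← hs'] using this
  have hmid : Nat.choose (s + k) k ≤ Nat.choose (s' + k - 1) k :=
    Nat.choose_le_choose k (by omega)
  have hpos : 1 ≤ Nat.choose (s + k) k := Nat.choose_pos (by omega)
  omega

theorem stmt4 (k : ℕ) (hk : 1 ≤ k) (x x' : ℕ → ℕ)
    (hg : g k x = g k x') :
    ∑ i ∈ Finset.range k, x i = ∑ i ∈ Finset.range k, x' i := by
  rcases lt_trichotomy (∑ i ∈ Finset.range k, x i) (∑ i ∈ Finset.range k, x' i) with hlt | heq | hgt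
  · exact absurd hg (Nat.ne_of_lt (g_lt k hk x x' hlt))
  · exact heq
  · exact absurd hg.symm (Nat.ne_of_lt (g_lt k hk x' x hgt))
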